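/- Let Γ = ⟨R_{-1}, R_0, ..., R_n⟩ be a generalized string C-group with n ≥ 1. Then the poset K(Γ) whose i-faces (for -1 ≤ i ≤ n) are the right cosets of Γ_i = ⟨R_k : k ≠ i⟩, with Γ_i φ ≤ Γ_j ψ iff i ≤ j and φψ^{-1} ∈ Γ_{i+1}^+ Γ_{j-1}^-, is a regular incidence complex of rank n on which Γ acts flag-transitively by right multiplication. -/

import Mathlib

open Set Pointwise

/-- `Φ` is a flag of the subset `s` of the poset `α`: a chain contained in `s`
that is maximal among chains contained in `s`. -/
def IsFlagOf {α : Type*} [PartialOrder α] (s Φ : Set α) : Prop :=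
  Φ ⊆ s ∧ IsChain (· ≤ ·) Φ ∧
    ∀ Ψ : Set α, Ψ ⊆ s → IsChain (· ≤ ·) Ψ → Φ ⊆ Ψ → Ψ = Φ

/-- Two flags are adjacent if each differs from the other in exactly one face. -/
def FlagAdj {α : Type*} [PartialOrder α] (Φ Ψ : Set α) : Prop :=
  (Φ \ Ψ).ncard = 1 ∧ (Ψ \ Φ).ncard = 1

/-- The set `s` is flag-connected: any two flags of `s` are joined by a sequence
of successively adjacent flags of `s`. -/
def FlagConnIn {α : Type*} [PartialOrder α] (s : Set α) : Prop :=
  ∀ Φ Ψ : Set α, IsFlagOf s Φ → IsFlagOf s Ψ →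
    Relation.ReflTransGen
      (fun A B => IsFlagOf s A ∧ IsFlagOf s B ∧ FlagAdj A B) Φ Ψ

/-- The section between `F` and `G` is connected: any two of its proper faces are
joined by a finite sequence of successively incident proper faces of the section. -/
def ConnIn {α : Type*} [PartialOrder α] (F G : α) : Prop :=
  ∀ H K : α, F < H → H < G → F < K → K < G →
    Relation.ReflTransGen
      (fun a b => F < a ∧ a < G ∧ F < b ∧ b < G ∧ (a ≤ b ∨ b ≤ a)) H K

/-- An incidence complex of rank `n`: a bounded ranked poset (rank function `rk`
with range `{-1,…,n}`, strictly monotone, all flags having `n+2` elements hitting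
every rank), strongly connected (I3), and with at least two `i`-faces between any
incident pair of faces of ranks `i-1` and `i+1` (I4). -/
structure IncComplex (α : Type*) [PartialOrder α] [BoundedOrder α]
    (n : ℤ) (rk : α → ℤ) : Prop where
  rk_bot : rk (⊥ : α) = -1
  rk_top : rk (⊤ : α) = n
  rk_strictMono : ∀ a b : α, a < b → rk a < rk b
  chain_flag : ∀ c : Set α, IsChain (· ≤ ·) c →
    ∃ Φ : Set α, c ⊆ Φ ∧ IsFlagOf Set.univ Φ ∧ Φ.ncard = (n + 2).toNat
  flag_rk : ∀ Φ : Set α, IsFlagOf Set.univ Φ →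
    ∀ i ∈ Set.Icc (-1 : ℤ) n, ∃ a ∈ Φ, rk a = i
  strong_conn : ∀ F G : α, F ≤ G → 2 ≤ rk G - rk F - 1 → ConnIn F G
  two_between : ∀ F G : α, F < G → rk G = rk F + 2 →
    ∃ H H' : α, H ≠ H' ∧ F < H ∧ H < G ∧ F < H' ∧ H' < G

/-- A complex is regular if its automorphism group acts transitively on flags. -/
def IsRegularIC (α : Type*) [PartialOrder α] : Prop :=
  ∀ Φ Ψ : Set α, IsFlagOf Set.univ Φ → IsFlagOf Set.univ Ψ →
    ∃ g : α ≃o α, ⇑g '' Φ = Ψ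

/-- `Γ` is a flag-transitive subgroup of the automorphism group. -/
def FlagTrans {α : Type*} [PartialOrder α] (Γ : Subgroup (α ≃o α)) : Prop :=
  ∀ Φ Ψ : Set α, IsFlagOf Set.univ Φ → IsFlagOf Set.univ Ψ →
    ∃ g ∈ Γ, ⇑g '' Φ = Ψ

/-- The distinguished generating subset `R_i`: the stabilizer in `Γ` of
`Φ \ {F_i}`, where `F` enumerates the base flag by rank. -/
def Rset {α : Type*} [PartialOrder α] (Γ : Subgroup (α ≃o α)) (F : ℤ → α)
    (n i : ℤ) : Set (α ≃o α) :=
  {g | g ∈ Γ ∧ ∀ j ∈ Set.Icc (-1 : ℤ) n, j ≠ i → g (F j) = F j}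

/-- The distinguished subgroup `Γ_I = ⟨R_i : i ∈ I⟩` of a group with a system of
generating subgroups `R : ℤ → Subgroup G` (with the convention `Γ_∅ = R_{-1}`,
which is harmless for nonempty `I ⊆ {-1,…,n}` since `R_{-1}` is contained in
every `R_i`). -/
def GamI {G : Type*} [Group G] (R : ℤ → Subgroup G) (I : Set ℤ) : Subgroup G :=
  R (-1) ⊔ ⨆ i ∈ I, R i

/-- `Γ_k^- = ⟨R_j : j ≤ k⟩`. -/
def Gminus {G : Type*} [Group G] (R : ℤ → Subgroup G) (k : ℤ) : Subgroup G :=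
  GamI R (Set.Icc (-1) k)

/-- `Γ_k^+ = ⟨R_j : j ≥ k⟩`. -/
def Gplus {G : Type*} [Group G] (R : ℤ → Subgroup G) (n k : ℤ) : Subgroup G :=
  GamI R (Set.Icc k n)

/-- `Γ_i = ⟨R_j : j ≠ i⟩`. -/
def Gsub {G : Type*} [Group G] (R : ℤ → Subgroup G) (n i : ℤ) : Subgroup G :=
  GamI R (Set.Icc (-1) n \ {i})

/-- A generalized string C-group of rank `n`: a group generated by subgroups
`R_{-1}, R_0, …, R_n` with `R_{-1} = R_n` a proper subgroup of each `R_i`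
(`0 ≤ i ≤ n-1`), satisfying the intersection property and the commutation rules
`R_i R_j = R_j R_i` (as product sets) for non-adjacent indices. -/
structure GenStringC {G : Type*} [Group G] (n : ℤ) (R : ℤ → Subgroup G) : Prop where
  one_le_n : 1 ≤ n
  gen_top : GamI R (Set.Icc (-1) n) = ⊤
  ends_eq : R (-1) = R n
  ends_lt : ∀ i ∈ Set.Icc (0 : ℤ) (n - 1), R (-1) < R i
  inter : ∀ I J : Set ℤ, I ⊆ Set.Icc (-1 : ℤ) n → J ⊆ Set.Icc (-1 : ℤ) n →
    GamI R I ⊓ GamI R J = GamI R (I ∩ J)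
  comm : ∀ i j : ℤ, -1 ≤ i → i < j - 1 → j ≤ n →
    (↑(R i) : Set G) * ↑(R j) = (↑(R j) : Set G) * ↑(R i)

/-- The set of `i`-faces of `K(Γ)`: right cosets of `Γ_i = ⟨R_k : k ≠ i⟩`. -/
def Gface {G : Type*} [Group G] (n : ℤ) (R : ℤ → Subgroup G) (i : ℤ) :=
  Quotient (QuotientGroup.rightRel (Gsub R n i))

/-- The faces of the complex `K(Γ)`: for each rank `i ∈ {-1,…,n}` the right
cosets `Γ_i φ`. -/
def KF {G : Type*} [Group G] (n : ℤ) (R : ℤ → Subgroup G) :=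
  Σ i : ↥(Set.Icc (-1 : ℤ) n), Gface n R i.1

/-- The incidence relation of `K(Γ)`:
`Γ_i φ ≤ Γ_j ψ  iff  i ≤ j and φψ⁻¹ ∈ Γ_{i+1}^+ Γ_{j-1}^-`. -/
def KGle {G : Type*} [Group G] (n : ℤ) (R : ℤ → Subgroup G)
    (x y : KF n R) : Prop :=
  x.1.1 ≤ y.1.1 ∧ ∃ φ ψ : G,
    x.2 = Quotient.mk (QuotientGroup.rightRel (Gsub R n x.1.1)) φ ∧
    y.2 = Quotient.mk (QuotientGroup.rightRel (Gsub R n y.1.1)) ψ ∧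
    φ * ψ⁻¹ ∈ (↑(Gplus R n (x.1.1 + 1)) : Set G) * ↑(Gminus R (y.1.1 - 1))

/-- Right multiplication action of `Γ` on the faces of `K(Γ)`. -/
def rmulKF {G : Type*} [Group G] (n : ℤ) (R : ℤ → Subgroup G) (g : G)
    (x : KF n R) : KF n R :=
  ⟨x.1, Quotient.map (· * g)
    (fun a b h => by
      have h' : b * a⁻¹ ∈ Gsub R n x.1.1 :=
        (QuotientGroup.rightRel_apply).1 h
      refine (QuotientGroup.rightRel_apply).2 ?_
      simpa [mul_assoc] using h') x.2⟩


/-!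
Write `Γ⁺_k`, `Γ⁻_k` for `Gplus`, `Gminus`. The commutation rules make `Γ⁻_{j-1}` and `Γ⁺_{j+1}`
permute, so `Γ_j = Γ⁺_{j+1} Γ⁻_{j-1}` and the sets `I_{ij} = Γ⁺_{i+1} Γ⁻_{j-1}` satisfy
`I_{ij} I_{jk} = I_{ik}`; hence incidence does not depend on the coset representatives and is
transitive. Pushing representatives down a chain one face at a time shows that every chain lies
in a flag `{Γ_i φ}` with a single representative `φ`, so these are exactly the flags, and `Γ`
permutes them transitively by right multiplication. The intersection property gives
`R_{i+1} ∩ Γ_{i+1} = R_{-1} < R_{i+1}`, hence two faces between ranks `i` and `i + 2`; and the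
faces strictly between `Γ_i φ` and `Γ_j φ` are the `Γ_m δφ` with `δ ∈ Γ_i ∩ Γ_j = ⟨R_k : k ≠ i, j⟩`,
which are connected by induction on a word for `δ`.
-/

namespace Subgroup

variable {G : Type*} [Group G]

theorem coe_mul_coe_of_le {H K : Subgroup G} (h : K ≤ H) : (H : Set G) * K = H :=
  (Set.mul_subset_mul_left (SetLike.coe_subset_coe.2 h)).trans_eq (coe_mul_coe H) |>.antisymm
    (Set.subset_mul_left _ K.one_mem)

theorem coe_mul_coe_of_ge {H K : Subgroup G} (h : H ≤ K) : (H : Set G) * K = K :=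
  (Set.mul_subset_mul_right (SetLike.coe_subset_coe.2 h)).trans_eq (coe_mul_coe K) |>.antisymm
    (Set.subset_mul_right _ H.one_mem)

theorem mul_comm_of_le {H K : Subgroup G} (h : K ≤ H) : (H : Set G) * K = K * H := by
  rw [coe_mul_coe_of_le h, coe_mul_coe_of_ge h]

theorem mul_comm_of_mul_subset {H K : Subgroup G} (h : (H : Set G) * K ⊆ K * H) :
    (H : Set G) * K = K * H := by
  refine h.antisymm ?_
  simpa only [mul_inv_rev, inv_coe_set] using Set.inv_subset_inv.2 h

theorem coe_sup_of_mul_comm {H K : Subgroup G} (h : (H : Set G) * K = K * H) :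
    ((H ⊔ K : Subgroup G) : Set G) = H * K := by
  rw [sup_eq_closure_mul]
  refine Set.Subset.antisymm (fun x hx => ?_) subset_closure
  induction hx using closure_induction'' with
  | mem _ hx => exact hx
  | inv_mem x hx =>
    rw [← Set.mem_inv, mul_inv_rev, inv_coe_set, inv_coe_set, ← h]
    exact hx
  | one => exact ⟨1, H.one_mem, 1, K.one_mem, mul_one 1⟩
  | mul x y _ _ hx hy =>
    have hHK : (H : Set G) * K * (H * K) = H * K := by
      rw [mul_assoc, ← mul_assoc (K : Set G), ← h, mul_assoc, coe_mul_coe, ← mul_assoc,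
        coe_mul_coe]
    exact hHK ▸ Set.mul_mem_mul hx hy

theorem mul_iSup_comm {ι : Sort*} (H : Subgroup G) (K : ι → Subgroup G)
    (h : ∀ i, (H : Set G) * K i = K i * H) :
    (H : Set G) * ↑(⨆ i, K i) = ↑(⨆ i, K i) * H := by
  refine mul_comm_of_mul_subset ?_
  rintro _ ⟨a, ha, x, hx, rfl⟩
  refine iSup_induction K (C := fun x => ∀ a ∈ H, a * x ∈ (↑(⨆ i, K i) : Set G) * H) hx
    (fun i x hx a ha => ?_) (fun a ha => ⟨1, one_mem _, a, ha, by simp⟩) ?_ a ha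
  · obtain ⟨k, hk, a', ha', hka⟩ : a * x ∈ (K i : Set G) * H := h i ▸ Set.mul_mem_mul ha hx
    exact hka ▸ Set.mul_mem_mul (mem_iSup_of_mem i hk) ha'
  · rintro x y hx hy a ha
    obtain ⟨k, hk, a', ha', hka⟩ := hx a ha
    obtain ⟨k', hk', a'', ha'', hka'⟩ := hy a' ha'
    refine ⟨k * k', mul_mem hk hk', a'', ha'', ?_⟩
    simp only at hka hka' ⊢
    rw [mul_assoc, hka', ← mul_assoc, hka, mul_assoc]

end Subgroup

section GamI

variable {G : Type*} [Group G] {R : ℤ → Subgroup G}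

theorem GamI_eq_biSup (R : ℤ → Subgroup G) (I : Set ℤ) :
    GamI R I = ⨆ i ∈ insert (-1) I, R i :=
  iSup_insert.symm

theorem le_GamI {I : Set ℤ} {k : ℤ} (hk : k ∈ insert (-1) I) : R k ≤ GamI R I := by
  rw [GamI_eq_biSup]
  exact le_biSup R hk

theorem R_le_Gsub {n k m : ℤ} (hk : k ∈ Set.Icc (-1 : ℤ) n) (hkm : k ≠ m) : R k ≤ Gsub R n m :=
  le_GamI (Set.mem_insert_of_mem _ ⟨hk, hkm⟩)

theorem GamI_mono {I J : Set ℤ} (h : I ⊆ J) : GamI R I ≤ GamI R J :=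
  sup_le_sup_left (biSup_mono h) _

theorem GamI_mul_comm {I J : Set ℤ}
    (h : ∀ i ∈ insert (-1) I, ∀ j ∈ insert (-1) J, (R i : Set G) * R j = R j * R i) :
    (GamI R I : Set G) * GamI R J = GamI R J * GamI R I := by
  simp only [GamI_eq_biSup]
  refine Subgroup.mul_iSup_comm _ _ fun j => Subgroup.mul_iSup_comm _ _ fun hj => ?_
  exact (Subgroup.mul_iSup_comm _ _ fun i => Subgroup.mul_iSup_comm _ _ fun hi =>
    (h i hi j hj).symm).symm

theorem GamI_induction_left {I : Set ℤ} {p : G → Prop} {x : G} (hx : x ∈ GamI R I)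
    (one : p 1) (mul_left : ∀ k ∈ insert (-1) I, ∀ r ∈ R k, ∀ y, p y → p (r * y)) : p x := by
  suffices ∀ y, p y → p (x * y) by simpa using this 1 one
  rw [GamI_eq_biSup] at hx
  let C : G → Prop := fun x => ∀ y, p y → p (x * y)
  have one' : C 1 := fun y hy => by rwa [one_mul]
  have mul' : ∀ a b, C a → C b → C (a * b) := fun a b ha hb y hy => by
    rw [mul_assoc]; exact ha _ (hb y hy)
  refine Subgroup.iSup_induction _ (C := C) hx (fun k z hz => ?_) one' mul'
  exact Subgroup.iSup_induction _ (C := C) hz (fun hk r hr => mul_left k hk r hr) one' mul'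

theorem Gplus_anti {n b b' : ℤ} (h : b ≤ b') : Gplus R n b' ≤ Gplus R n b :=
  GamI_mono (Set.Icc_subset_Icc_left h)

theorem Gminus_mono {a a' : ℤ} (h : a ≤ a') : Gminus R a ≤ Gminus R a' :=
  GamI_mono (Set.Icc_subset_Icc_right h)

theorem Gplus_le_Gsub {n b i : ℤ} (hi : -1 ≤ i) (h : i < b) : Gplus R n b ≤ Gsub R n i :=
  GamI_mono fun x hx => ⟨⟨by linarith [hx.1], hx.2⟩, by rintro rfl; linarith [hx.1]⟩

theorem Gminus_le_Gsub {n a i : ℤ} (hi : i ≤ n) (h : a < i) : Gminus R a ≤ Gsub R n i :=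
  GamI_mono fun x hx => ⟨⟨hx.1, by linarith [hx.2]⟩, by rintro rfl; linarith [hx.2]⟩

theorem Gsub_eq_sup {n i : ℤ} (hi : i ∈ Set.Icc (-1 : ℤ) n) :
    Gsub R n i = Gplus R n (i + 1) ⊔ Gminus R (i - 1) := by
  obtain ⟨hi₁, hi₂⟩ := hi
  have : Set.Icc (-1 : ℤ) n \ {i} = Set.Icc (i + 1) n ∪ Set.Icc (-1) (i - 1) := by
    ext x
    simp only [Set.mem_sdiff, Set.mem_Icc, Set.mem_singleton_iff, Set.mem_union]
    omega
  rw [Gsub, this, GamI, iSup_union, sup_sup_distrib_left]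
  rfl

end GamI

def incidenceSet {G : Type*} [Group G] (R : ℤ → Subgroup G) (n i j : ℤ) : Set G :=
  ↑(Gplus R n (i + 1)) * ↑(Gminus R (j - 1))

theorem one_mem_incidenceSet {G : Type*} [Group G] (R : ℤ → Subgroup G) (n i j : ℤ) :
    (1 : G) ∈ incidenceSet R n i j :=
  ⟨1, one_mem _, 1, one_mem _, mul_one 1⟩

namespace GenStringC

variable {G : Type*} [Group G] {n : ℤ} {R : ℤ → Subgroup G}

theorem neg_one_mem (hC : GenStringC n R) : (-1 : ℤ) ∈ Set.Icc (-1 : ℤ) n :=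
  ⟨le_rfl, by linarith [hC.one_le_n]⟩

theorem R_neg_one_le (hC : GenStringC n R) {i : ℤ} (hi : i ∈ Set.Icc (-1 : ℤ) n) :
    R (-1) ≤ R i := by
  rcases hi.1.eq_or_lt with rfl | h
  · exact le_rfl
  rcases hi.2.eq_or_lt with rfl | h'
  · exact hC.ends_eq.le
  exact (hC.ends_lt i ⟨by omega, by omega⟩).le

theorem GamI_mul_comm (hC : GenStringC n R) {I J : Set ℤ} (hI : I ⊆ Set.Icc (-1) n)
    (hJ : J ⊆ Set.Icc (-1) n) (hIJ : ∀ i ∈ I, ∀ j ∈ J, i + 2 ≤ j) :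
    (GamI R I : Set G) * GamI R J = GamI R J * GamI R I := by
  refine _root_.GamI_mul_comm fun i hi j hj => ?_
  rcases hi with rfl | hi
  · exact (Subgroup.mul_comm_of_le (hC.R_neg_one_le (Set.insert_subset hC.neg_one_mem hJ hj))).symm
  rcases hj with rfl | hj
  · exact Subgroup.mul_comm_of_le (hC.R_neg_one_le (hI hi))
  exact hC.comm i j (hI hi).1 (by linarith [hIJ i hi j hj]) (hJ hj).2

theorem Gminus_mul_Gplus_comm (hC : GenStringC n R) {j : ℤ} (hj : j ∈ Set.Icc (-1 : ℤ) n) :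
    (Gminus R (j - 1) : Set G) * Gplus R n (j + 1) = Gplus R n (j + 1) * Gminus R (j - 1) :=
  hC.GamI_mul_comm (Set.Icc_subset_Icc le_rfl (by linarith [hj.2]))
    (Set.Icc_subset_Icc (by linarith [hj.1]) le_rfl) fun _ ha _ hb => by linarith [ha.2, hb.1]

theorem coe_Gsub (hC : GenStringC n R) {i : ℤ} (hi : i ∈ Set.Icc (-1 : ℤ) n) :
    (Gsub R n i : Set G) = incidenceSet R n i i := by
  rw [Gsub_eq_sup hi, Subgroup.coe_sup_of_mul_comm (hC.Gminus_mul_Gplus_comm hi).symm]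
  rfl

theorem incidenceSet_mul (hC : GenStringC n R) {i j k : ℤ} (hj : j ∈ Set.Icc (-1 : ℤ) n)
    (hij : i ≤ j) (hjk : j ≤ k) :
    incidenceSet R n i j * incidenceSet R n j k = incidenceSet R n i k := by
  calc incidenceSet R n i j * incidenceSet R n j k
      = (Gplus R n (i + 1) : Set G) * (Gminus R (j - 1) * Gplus R n (j + 1)) *
          Gminus R (k - 1) := by simp only [incidenceSet, mul_assoc]
    _ = (Gplus R n (i + 1) : Set G) * Gplus R n (j + 1) *
          (Gminus R (j - 1) * Gminus R (k - 1)) := by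
        rw [hC.Gminus_mul_Gplus_comm hj]; simp only [mul_assoc]
    _ = incidenceSet R n i k := by
        rw [Subgroup.coe_mul_coe_of_le (Gplus_anti (by linarith)),
          Subgroup.coe_mul_coe_of_ge (Gminus_mono (by linarith))]
        rfl

theorem Gsub_eq_top (hC : GenStringC n R) {i : ℤ} (hi : R i ≤ R (-1)) : Gsub R n i = ⊤ := by
  rw [eq_top_iff, ← hC.gen_top]
  refine sup_le le_sup_left (iSup₂_le fun k hk => ?_)
  rcases eq_or_ne k i with rfl | hki
  · exact hi.trans le_sup_left
  · exact R_le_Gsub hk hki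

theorem R_inf_Gsub_le (hC : GenStringC n R) {k : ℤ} (hk : k ∈ Set.Icc (-1 : ℤ) n) :
    R k ⊓ Gsub R n k ≤ R (-1) := by
  have h := hC.inter {k} (Set.Icc (-1) n \ {k}) (Set.singleton_subset_iff.2 hk) Set.sdiff_subset
  rw [Set.singleton_inter_eq_empty.2 fun h => h.2 rfl] at h
  calc R k ⊓ Gsub R n k ≤ GamI R {k} ⊓ Gsub R n k :=
        inf_le_inf_right _ (le_GamI (Set.mem_insert_of_mem _ rfl))
    _ = R (-1) := by rw [Gsub, h]; simp [GamI]

end GenStringC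

/-- The relation whose reflexive-transitive closure `ConnIn F G` asks for. -/
def SectionAdj {α : Type*} [PartialOrder α] (F G a b : α) : Prop :=
  F < a ∧ a < G ∧ F < b ∧ b < G ∧ (a ≤ b ∨ b ≤ a)

instance {α : Type*} [PartialOrder α] (F G : α) : Std.Symm (SectionAdj F G) where
  symm _ _ := fun ⟨h₁, h₂, h₃, h₄, h₅⟩ => ⟨h₃, h₄, h₁, h₂, h₅.symm⟩

namespace KF

variable {G : Type*} [Group G] {n : ℤ}

def face (R : ℤ → Subgroup G) (i : Set.Icc (-1 : ℤ) n) (g : G) : KF n R :=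
  ⟨i, Quotient.mk (QuotientGroup.rightRel (Gsub R n i)) g⟩

def baseFlag (n : ℤ) (R : ℤ → Subgroup G) (g : G) : Set (KF n R) :=
  Set.range (face R · g)

variable {R : ℤ → Subgroup G}

theorem exists_face_eq (x : KF n R) : ∃ i g, face R i g = x := by
  obtain ⟨i, q⟩ := x
  obtain ⟨g, rfl⟩ := Quotient.exists_rep q
  exact ⟨i, g, rfl⟩

theorem face_eq_face_iff {i : Set.Icc (-1 : ℤ) n} {g h : G} :
    face R i g = face R i h ↔ h * g⁻¹ ∈ Gsub R n i := by
  refine ⟨fun he => ?_, fun hm => ?_⟩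
  · exact QuotientGroup.rightRel_apply.1 (Quotient.exact (eq_of_heq (Sigma.mk.inj he).2))
  · exact congrArg (Sigma.mk i) (Quotient.sound (QuotientGroup.rightRel_apply.2 hm))

theorem face_mul_eq {i : Set.Icc (-1 : ℤ) n} {x : G} (hx : x ∈ Gsub R n i) (g : G) :
    face R i (x * g) = face R i g :=
  face_eq_face_iff.2 (by simpa using inv_mem hx)

theorem face_injective (g : G) : Function.Injective (face R · g : Set.Icc (-1 : ℤ) n → KF n R) :=
  fun _ _ h => congrArg Sigma.fst h

theorem face_mem_baseFlag (i : Set.Icc (-1 : ℤ) n) (g : G) : face R i g ∈ baseFlag n R g :=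
  ⟨i, rfl⟩

theorem mem_baseFlag_iff {x : KF n R} {g : G} : x ∈ baseFlag n R g ↔ face R x.1 g = x :=
  ⟨fun ⟨_, h⟩ => h ▸ rfl, fun h => ⟨x.1, h⟩⟩

theorem ncard_baseFlag (g : G) : (baseFlag n R g).ncard = (n + 2).toNat := by
  rw [baseFlag, Set.ncard_range_of_injective (face_injective g), Nat.card_eq_fintype_card]
  simp
  ring_nf

theorem rmulKF_face (x : G) (i : Set.Icc (-1 : ℤ) n) (g : G) :
    rmulKF n R x (face R i g) = face R i (g * x) :=
  rfl

theorem image_rmulKF_baseFlag (x g : G) :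
    rmulKF n R x '' baseFlag n R g = baseFlag n R (g * x) :=
  (Set.range_comp _ _).symm

theorem face_eq_face_of_Gsub_eq_top {i : Set.Icc (-1 : ℤ) n} (htop : Gsub R n i = ⊤) (g h : G) :
    face R i g = face R i h :=
  face_eq_face_iff.2 (htop ▸ Subgroup.mem_top _)

theorem rank_le_of_kgle {x y : KF n R} (h : KGle n R x y) : (x.1 : ℤ) ≤ y.1 :=
  h.1

variable [hC : Fact (GenStringC n R)]

theorem kgle_face_face_iff {i j : Set.Icc (-1 : ℤ) n} {g h : G} :
    KGle n R (face R i g) (face R j h) ↔ (i : ℤ) ≤ j ∧ g * h⁻¹ ∈ incidenceSet R n i j := by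
  refine ⟨fun ⟨hij, φ, ψ, hφ, hψ, hφψ⟩ => ⟨hij, ?_⟩, fun ⟨hij, hgh⟩ => ⟨hij, g, h, rfl, rfl, hgh⟩⟩
  change (i : ℤ) ≤ j at hij
  change φ * ψ⁻¹ ∈ incidenceSet R n i j at hφψ
  have hφ' : (φ * g⁻¹)⁻¹ ∈ incidenceSet R n i i := by
    rw [← hC.out.coe_Gsub i.2]
    exact inv_mem (QuotientGroup.rightRel_apply.1 (Quotient.exact hφ))
  have hψ' : ψ * h⁻¹ ∈ incidenceSet R n j j := by
    rw [← hC.out.coe_Gsub j.2]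
    exact QuotientGroup.rightRel_apply.1 (Quotient.exact hψ)
  rw [show g * h⁻¹ = (φ * g⁻¹)⁻¹ * (φ * ψ⁻¹) * (ψ * h⁻¹) by group,
    ← hC.out.incidenceSet_mul j.2 hij le_rfl, ← hC.out.incidenceSet_mul i.2 le_rfl hij]
  exact Set.mul_mem_mul (Set.mul_mem_mul hφ' hφψ) hψ'

theorem kgle_refl (x : KF n R) : KGle n R x x := by
  obtain ⟨i, g, rfl⟩ := exists_face_eq x
  exact kgle_face_face_iff.2 ⟨le_rfl, by simpa using one_mem_incidenceSet R n i i⟩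

theorem face_eq_of_kgle {i : Set.Icc (-1 : ℤ) n} {g h : G}
    (hle : KGle n R (face R i g) (face R i h)) : face R i g = face R i h := by
  have hgh := (kgle_face_face_iff.1 hle).2
  rw [← hC.out.coe_Gsub i.2] at hgh
  exact face_eq_face_iff.2 (by simpa using inv_mem hgh)

theorem eq_of_kgle_of_rank_eq {x y : KF n R} (hle : KGle n R x y) (hr : x.1 = y.1) : x = y := by
  obtain ⟨i, g, rfl⟩ := exists_face_eq x
  obtain ⟨j, h, rfl⟩ := exists_face_eq y
  obtain rfl : i = j := hr
  exact face_eq_of_kgle hle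

theorem kgle_trans {x y z : KF n R} (hxy : KGle n R x y) (hyz : KGle n R y z) :
    KGle n R x z := by
  obtain ⟨i, g, rfl⟩ := exists_face_eq x
  obtain ⟨j, h, rfl⟩ := exists_face_eq y
  obtain ⟨k, l, rfl⟩ := exists_face_eq z
  obtain ⟨hij, hgh⟩ := kgle_face_face_iff.1 hxy
  obtain ⟨hjk, hhl⟩ := kgle_face_face_iff.1 hyz
  refine kgle_face_face_iff.2 ⟨hij.trans hjk, ?_⟩
  rw [← hC.out.incidenceSet_mul j.2 hij hjk, show g * l⁻¹ = g * h⁻¹ * (h * l⁻¹) by group]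
  exact Set.mul_mem_mul hgh hhl

instance : PartialOrder (KF n R) where
  le := KGle n R
  lt x y := KGle n R x y ∧ (x.1 : ℤ) < y.1
  le_refl := kgle_refl
  le_trans _ _ _ := kgle_trans
  lt_iff_le_not_ge x y := by
    refine ⟨fun ⟨hxy, hr⟩ => ⟨hxy, fun hyx => (rank_le_of_kgle hyx).not_gt hr⟩,
      fun ⟨hxy, hyx⟩ => ⟨hxy, (rank_le_of_kgle hxy).lt_of_ne fun hr => hyx ?_⟩⟩
    rw [eq_of_kgle_of_rank_eq hxy (Subtype.ext hr)]
    exact kgle_refl y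
  le_antisymm _ _ hxy hyx :=
    eq_of_kgle_of_rank_eq hxy (Subtype.ext ((rank_le_of_kgle hxy).antisymm (rank_le_of_kgle hyx)))

theorem face_le_face_iff {i j : Set.Icc (-1 : ℤ) n} {g h : G} :
    face R i g ≤ face R j h ↔ (i : ℤ) ≤ j ∧ g * h⁻¹ ∈ incidenceSet R n i j :=
  kgle_face_face_iff

theorem face_le_face {i j : Set.Icc (-1 : ℤ) n} (hij : (i : ℤ) ≤ j) (g : G) :
    face R i g ≤ face R j g :=
  face_le_face_iff.2 ⟨hij, by simpa using one_mem_incidenceSet R n i j⟩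

theorem face_lt_face {i j : Set.Icc (-1 : ℤ) n} (hij : (i : ℤ) < j) (g : G) :
    face R i g < face R j g :=
  ⟨face_le_face hij.le g, hij⟩

instance : BoundedOrder (KF n R) where
  top := face R ⟨n, by linarith [hC.out.one_le_n], le_rfl⟩ 1
  le_top x := by
    obtain ⟨i, g, rfl⟩ := exists_face_eq x
    rw [face_eq_face_of_Gsub_eq_top (hC.out.Gsub_eq_top hC.out.ends_eq.ge) 1 g]
    exact face_le_face i.2.2 g
  bot := face R ⟨-1, hC.out.neg_one_mem⟩ 1
  bot_le x := by
    obtain ⟨i, g, rfl⟩ := exists_face_eq x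
    rw [face_eq_face_of_Gsub_eq_top (hC.out.Gsub_eq_top le_rfl) 1 g]
    exact face_le_face i.2.1 g

theorem rank_injOn {c : Set (KF n R)} (hc : IsChain (· ≤ ·) c) :
    Set.InjOn (fun x : KF n R => x.1) c := by
  intro x hx y hy hxy
  rcases hc.total hx hy with h | h
  · exact eq_of_kgle_of_rank_eq h hxy
  · exact (eq_of_kgle_of_rank_eq h hxy.symm).symm

theorem exists_face_eq_mul_of_le {i j : Set.Icc (-1 : ℤ) n} {φ g : G}
    (h : face R i φ ≤ face R j g) : ∃ β ∈ Gminus R (j - 1), face R i (β * g) = face R i φ := by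
  obtain ⟨-, α, hα, β, hβ, hαβ⟩ := face_le_face_iff.1 h
  refine ⟨β, hβ, face_eq_face_iff.2 ?_⟩
  rw [mul_inv_rev, ← mul_assoc, ← (hαβ : α * β = φ * g⁻¹), mul_inv_cancel_right]
  exact Gplus_le_Gsub i.2.1 (lt_add_one _) hα

theorem exists_subset_baseFlag {c : Set (KF n R)} (hc : IsChain (· ≤ ·) c) :
    ∃ g, c ⊆ baseFlag n R g := by
  classical
  suffices ∀ s : Finset (KF n R), ↑s ⊆ c → ∃ g, ↑s ⊆ baseFlag n R g by
    have hfin : c.Finite := (Set.toFinite _).of_finite_image (rank_injOn hc)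
    simpa using this hfin.toFinset (by simp)
  intro s
  induction s using Finset.induction_on_min_value (fun x : KF n R => (x.1 : ℤ)) with
  | empty => exact fun _ => ⟨1, by simp⟩
  | insert a s _ hmin ih =>
    rw [Finset.coe_insert, Set.insert_subset_iff]
    rintro ⟨ha, hs⟩
    obtain ⟨g, hg⟩ := ih hs
    obtain ⟨i, φ, rfl⟩ := exists_face_eq a
    rcases s.eq_empty_or_nonempty with rfl | hne
    · exact ⟨φ, by simp [face_mem_baseFlag]⟩
    obtain ⟨y, hy, hymin⟩ := s.exists_min_image (fun x : KF n R => (x.1 : ℤ)) hne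
    obtain ⟨j, rfl⟩ := hg hy
    have hle : face R i φ ≤ face R j g := by
      rcases hc.total ha (hs hy) with h | h
      · exact h
      · exact (eq_of_kgle_of_rank_eq h (Subtype.ext (h.1.antisymm (hmin _ hy)))).ge
    obtain ⟨β, hβ, hφ⟩ := exists_face_eq_mul_of_le hle
    refine ⟨β * g, Set.insert_subset_iff.2 ⟨hφ ▸ face_mem_baseFlag i _, fun x hx => ?_⟩⟩
    obtain ⟨k, rfl⟩ := hg hx
    have hjk : (j : ℤ) ≤ k := hymin _ hx
    exact ⟨k, face_mul_eq (Gminus_le_Gsub k.2.2 (by linarith) hβ) g⟩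

theorem exists_faces_eq_of_le {x y : KF n R} (h : x ≤ y) :
    ∃ i j g, face R i g = x ∧ face R j g = y := by
  obtain ⟨g, hg⟩ := exists_subset_baseFlag (IsChain.pair h)
  obtain ⟨i, hi⟩ := hg (Set.mem_insert x _)
  obtain ⟨j, hj⟩ := hg (Set.mem_insert_of_mem x rfl)
  exact ⟨i, j, g, hi, hj⟩

theorem isChain_baseFlag (g : G) : IsChain (· ≤ ·) (baseFlag n R g) := by
  rintro _ ⟨i, rfl⟩ _ ⟨j, rfl⟩ -
  rcases le_total (i : ℤ) j with h | h
  exacts [Or.inl (face_le_face h g), Or.inr (face_le_face h g)]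

theorem isFlagOf_baseFlag (g : G) : IsFlagOf Set.univ (baseFlag n R g) := by
  refine ⟨Set.subset_univ _, isChain_baseFlag g, fun Ψ _ hΨ hsub => ?_⟩
  refine Set.Subset.antisymm (fun y hy => ?_) hsub
  exact ⟨y.1, rank_injOn hΨ (hsub (face_mem_baseFlag _ _)) hy rfl⟩

theorem exists_eq_baseFlag {Φ : Set (KF n R)} (hΦ : IsFlagOf Set.univ Φ) :
    ∃ g, Φ = baseFlag n R g := by
  obtain ⟨g, hg⟩ := exists_subset_baseFlag hΦ.2.1
  exact ⟨g, (hΦ.2.2 _ (Set.subset_univ _) (isChain_baseFlag g) hg).symm⟩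

theorem kgle_rmulKF_iff (x : G) (a b : KF n R) :
    KGle n R a b ↔ KGle n R (rmulKF n R x a) (rmulKF n R x b) := by
  obtain ⟨i, g, rfl⟩ := exists_face_eq a
  obtain ⟨j, h, rfl⟩ := exists_face_eq b
  rw [rmulKF_face, rmulKF_face, kgle_face_face_iff, kgle_face_face_iff,
    show g * x * (h * x)⁻¹ = g * h⁻¹ by group]

def rmulOrderIso (x : G) : KF n R ≃o KF n R where
  toFun := rmulKF n R x
  invFun := rmulKF n R x⁻¹
  left_inv a := by
    obtain ⟨i, g, rfl⟩ := exists_face_eq a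
    simp [rmulKF_face]
  right_inv a := by
    obtain ⟨i, g, rfl⟩ := exists_face_eq a
    simp [rmulKF_face]
  map_rel_iff' {a b} := (kgle_rmulKF_iff x a b).symm

theorem exists_rmulKF_image_eq {Φ Ψ : Set (KF n R)} (hΦ : IsFlagOf Set.univ Φ)
    (hΨ : IsFlagOf Set.univ Ψ) : ∃ x : G, rmulKF n R x '' Φ = Ψ := by
  obtain ⟨g, rfl⟩ := exists_eq_baseFlag hΦ
  obtain ⟨h, rfl⟩ := exists_eq_baseFlag hΨ
  exact ⟨g⁻¹ * h, by rw [image_rmulKF_baseFlag, mul_inv_cancel_left]⟩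

theorem exists_ne_faces_between {i j : Set.Icc (-1 : ℤ) n} (hij : (j : ℤ) = i + 2) (g : G) :
    ∃ H H' : KF n R, H ≠ H' ∧ face R i g < H ∧ H < face R j g ∧
      face R i g < H' ∧ H' < face R j g := by
  have hk : (i : ℤ) + 1 ∈ Set.Icc (0 : ℤ) (n - 1) := ⟨by linarith [i.2.1], by linarith [j.2.2]⟩
  let k : Set.Icc (-1 : ℤ) n := ⟨i + 1, by linarith [i.2.1], by linarith [j.2.2]⟩
  obtain ⟨r, hr, hr'⟩ := SetLike.exists_of_lt (hC.out.ends_lt _ hk)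
  have hr_mem : ∀ m : Set.Icc (-1 : ℤ) n, (m : ℤ) ≠ k → r ∈ Gsub R n m :=
    fun _ hm => R_le_Gsub k.2 hm.symm hr
  have hik : (i : ℤ) < k := lt_add_one _
  have hkj : (k : ℤ) < j := by simp [k, hij]
  refine ⟨face R k g, face R k (r * g), fun h => hr' ?_, face_lt_face hik g, face_lt_face hkj g,
    ?_, ?_⟩
  · exact hC.out.R_inf_Gsub_le k.2 ⟨hr, by simpa using face_eq_face_iff.1 h⟩
  · rw [← face_mul_eq (hr_mem i hik.ne) g]
    exact face_lt_face hik _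
  · rw [← face_mul_eq (hr_mem j hkj.ne') g]
    exact face_lt_face hkj _

theorem exists_eq_face_mul_of_mem_section {i j : Set.Icc (-1 : ℤ) n} {g : G} {H : KF n R}
    (hiH : face R i g < H) (hHj : H < face R j g) :
    ∃ δ ∈ Gsub R n i ⊓ Gsub R n j, face R H.1 (δ * g) = H := by
  have hc : IsChain (· ≤ ·) ({face R i g, H, face R j g} : Set (KF n R)) := by
    refine (IsChain.pair hHj.le).insert fun b hb _ => Or.inl ?_
    rcases hb with rfl | rfl
    exacts [hiH.le, hiH.le.trans hHj.le]
  obtain ⟨h, hh⟩ := exists_subset_baseFlag hc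
  have hi : face R i h = face R i g := mem_baseFlag_iff.1 (hh (Set.mem_insert _ _))
  have hj : face R j h = face R j g :=
    mem_baseFlag_iff.1 (hh (Set.mem_insert_of_mem _ (Set.mem_insert_of_mem _ rfl)))
  refine ⟨h * g⁻¹, ⟨?_, ?_⟩, ?_⟩
  · simpa using inv_mem (face_eq_face_iff.1 hi)
  · simpa using inv_mem (face_eq_face_iff.1 hj)
  · rw [inv_mul_cancel_right]
    exact mem_baseFlag_iff.1 (hh (Set.mem_insert_of_mem _ (Set.mem_insert _ _)))

theorem face_mul_mem_section {i j m : Set.Icc (-1 : ℤ) n} {δ : G}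
    (hδ : δ ∈ Gsub R n i ⊓ Gsub R n j) (him : (i : ℤ) < m) (hmj : (m : ℤ) < j) (g : G) :
    face R i g < face R m (δ * g) ∧ face R m (δ * g) < face R j g := by
  rw [← face_mul_eq hδ.1 g, ← face_mul_eq hδ.2 g]
  exact ⟨face_lt_face him _, face_lt_face hmj _⟩

theorem sectionAdj_face_mul {i j m m' : Set.Icc (-1 : ℤ) n} {δ : G}
    (hδ : δ ∈ Gsub R n i ⊓ Gsub R n j) (him : (i : ℤ) < m) (hmj : (m : ℤ) < j)
    (him' : (i : ℤ) < m') (hm'j : (m' : ℤ) < j) (g : G) :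
    SectionAdj (face R i g) (face R j g) (face R m (δ * g)) (face R m' (δ * g)) :=
  ⟨(face_mul_mem_section hδ him hmj g).1, (face_mul_mem_section hδ him hmj g).2,
    (face_mul_mem_section hδ him' hm'j g).1, (face_mul_mem_section hδ him' hm'j g).2,
    (le_total (m : ℤ) m').imp (face_le_face · _) (face_le_face · _)⟩

/-- Left multiplication by `r ∈ R_k` fixes every face of rank `≠ k`; since the open section
has at least two ranks, a face of any other rank gives a detour. -/
theorem reflTransGen_sectionAdj_face_mul {i j m₀ : Set.Icc (-1 : ℤ) n} (hij : (i : ℤ) + 3 ≤ j)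
    (him₀ : (i : ℤ) < m₀) (hm₀j : (m₀ : ℤ) < j) (g : G) {δ : G}
    (hδ : δ ∈ Gsub R n i ⊓ Gsub R n j) {m : Set.Icc (-1 : ℤ) n} (him : (i : ℤ) < m)
    (hmj : (m : ℤ) < j) :
    Relation.ReflTransGen (SectionAdj (face R i g) (face R j g)) (face R m (δ * g))
      (face R m₀ g) := by
  have hD : Gsub R n i ⊓ Gsub R n j =
      GamI R ((Set.Icc (-1) n \ {(i : ℤ)}) ∩ (Set.Icc (-1) n \ {(j : ℤ)})) :=
    hC.out.inter _ _ Set.sdiff_subset Set.sdiff_subset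
  refine GamI_induction_left (hD ▸ hδ) (p := fun δ => δ ∈ Gsub R n i ⊓ Gsub R n j →
    ∀ m : Set.Icc (-1 : ℤ) n, (i : ℤ) < m → (m : ℤ) < j →
      Relation.ReflTransGen (SectionAdj (face R i g) (face R j g)) (face R m (δ * g))
        (face R m₀ g)) ?_ ?_ hδ m him hmj
  · intro _ m him hmj
    exact .single (by simpa using sectionAdj_face_mul (one_mem _) him hmj him₀ hm₀j g)
  · intro k hk r hr y ih hry m him hmj
    have hrD : r ∈ Gsub R n i ⊓ Gsub R n j := hD ▸ le_GamI hk hr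
    have hyD : y ∈ Gsub R n i ⊓ Gsub R n j := by simpa using mul_mem (inv_mem hrD) hry
    obtain ⟨l, hil, hlj, hkl⟩ : ∃ l : ℤ, (i : ℤ) < l ∧ l < j ∧ k ≠ l :=
      ⟨if k = i + 1 then i + 2 else i + 1, by split_ifs <;> omega⟩
    let m' : Set.Icc (-1 : ℤ) n := ⟨l, by linarith [i.2.1], by linarith [j.2.2]⟩
    have hk' : k ∈ Set.Icc (-1 : ℤ) n := by
      rcases hk with rfl | hk
      exacts [hC.out.neg_one_mem, hk.1.1]
    refine .head (sectionAdj_face_mul hry him hmj (m' := m') hil hlj g) ?_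
    rw [mul_assoc, face_mul_eq (i := m') (R_le_Gsub hk' hkl hr)]
    exact ih hyD m' hil hlj

theorem connIn_face {i j : Set.Icc (-1 : ℤ) n} (hij : (i : ℤ) + 3 ≤ j) (g : G) :
    ConnIn (face R i g) (face R j g) := by
  let m₀ : Set.Icc (-1 : ℤ) n := ⟨i + 1, by linarith [i.2.1], by linarith [j.2.2]⟩
  have to_m₀ : ∀ H, face R i g < H → H < face R j g →
      Relation.ReflTransGen (SectionAdj (face R i g) (face R j g)) H (face R m₀ g) := by
    intro H hiH hHj
    obtain ⟨δ, hδ, hH⟩ := exists_eq_face_mul_of_mem_section hiH hHj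
    rw [← hH]
    exact reflTransGen_sectionAdj_face_mul hij (lt_add_one _) (by simp [m₀]; omega) g hδ
      hiH.2 hHj.2
  intro H K hiH hHj hiK hKj
  exact (to_m₀ H hiH hHj).trans (Std.Symm.symm _ _ (to_m₀ K hiK hKj))

end KF

/-- the poset `K(Γ)` associated with a generalized string C-group
`Γ = ⟨R_{-1},…,R_n⟩` (faces: right cosets of the `Γ_i`, order: `KGle`) is a
regular incidence complex of rank `n`, on which `Γ` acts flag-transitively by
right multiplication (and by order-automorphisms). -/
theorem kf_is_regular_incidence_complex {G : Type*} [Group G]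
    (n : ℤ) (R : ℤ → Subgroup G) (hC : GenStringC n R) :
    ∃ P : PartialOrder (KF n R),
      (∀ x y : KF n R, P.le x y ↔ KGle n R x y) ∧
      ∃ B : @BoundedOrder (KF n R) P.toLE,
        @IncComplex (KF n R) P B n (fun x => x.1.1) ∧
        @IsRegularIC (KF n R) P ∧
        (∀ g : G, ∀ x y : KF n R,
          KGle n R x y ↔ KGle n R (rmulKF n R g x) (rmulKF n R g y)) ∧
        (∀ Φ Ψ : Set (KF n R),
          @IsFlagOf (KF n R) P Set.univ Φ → @IsFlagOf (KF n R) P Set.univ Ψ →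
          ∃ g : G, rmulKF n R g '' Φ = Ψ) := by
  have : Fact (GenStringC n R) := ⟨hC⟩
  refine ⟨inferInstance, fun _ _ => Iff.rfl, inferInstance,
    ⟨rfl, rfl, fun _ _ h => h.2, ?_, ?_, ?_, ?_⟩,
    fun Φ Ψ hΦ hΨ => ?_, KF.kgle_rmulKF_iff, fun _ _ => KF.exists_rmulKF_image_eq⟩
  · intro c hc
    obtain ⟨g, hg⟩ := KF.exists_subset_baseFlag hc
    exact ⟨_, hg, KF.isFlagOf_baseFlag g, KF.ncard_baseFlag g⟩
  · intro Φ hΦ i hi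
    obtain ⟨g, rfl⟩ := KF.exists_eq_baseFlag hΦ
    exact ⟨_, KF.face_mem_baseFlag ⟨i, hi⟩ g, rfl⟩
  · intro F G hFG hgap
    obtain ⟨i, j, g, rfl, rfl⟩ := KF.exists_faces_eq_of_le hFG
    exact KF.connIn_face (by simp only [KF.face] at hgap; omega) g
  · intro F G hFG hrk
    obtain ⟨i, j, g, rfl, rfl⟩ := KF.exists_faces_eq_of_le hFG.le
    exact KF.exists_ne_faces_between hrk g
  · obtain ⟨x, hx⟩ := KF.exists_rmulKF_image_eq hΦ hΨ
    exact ⟨KF.rmulOrderIso x, hx⟩
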